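/- For every real m×n matrix M and every m×m real positive definite matrix Γ, one has (tr((M Mᵀ)^{1/2}))² ≤ tr(Mᵀ Γ⁻¹ M) · tr(Γ). -/

import Mathlib

/-! With the weight `Γ⁻¹`, `⟪X, Y⟫ = tr (Y Γ⁻¹ Xᵀ)` is a semi-inner product on square matrices.
For the symmetric square root `S` of `M Mᵀ` it gives `⟪S, Γ⟫ = tr S`,
`⟪S, S⟫ = tr (Γ⁻¹ S²) = tr (Mᵀ Γ⁻¹ M)` and `⟪Γ, Γ⟫ = tr Γ`, so the claim is Cauchy–Schwarz
for `S` and `Γ`. -/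

open Matrix

/-- Over `ℝ`, `M * Mᵀ` is positive semidefinite. -/
theorem posSemidef_self_mul_transpose {m n : ℕ} (M : Matrix (Fin m) (Fin n) ℝ) :
    (M * Mᵀ).PosSemidef := by
  simpa [Matrix.conjTranspose_eq_transpose_of_trivial] using
    Matrix.posSemidef_self_mul_conjTranspose M

/-- The square root of a positive semidefinite matrix, as formerly in Mathlib. -/
noncomputable def Matrix.PosSemidef.sqrt {n : Type*} {𝕜 : Type*} [Fintype n] [DecidableEq n]
    [RCLike 𝕜] [PartialOrder 𝕜] {A : Matrix n n 𝕜} (hA : A.PosSemidef) : Matrix n n 𝕜 :=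
  hA.1.eigenvectorUnitary.1 * diagonal ((↑) ∘ (Real.sqrt ∘ hA.1.eigenvalues)) *
    (star hA.1.eigenvectorUnitary : Matrix n n 𝕜)

theorem Matrix.trace_mul_mul_transpose_sq_le {n : Type*} [Fintype n] {W : Matrix n n ℝ}
    (hW : W.PosSemidef) (X Y : Matrix n n ℝ) :
    (Y * W * Xᵀ).trace ^ 2 ≤ (X * W * Xᵀ).trace * (Y * W * Yᵀ).trace := by
  let := W.toMatrixSeminormedAddCommGroup hW
  let := W.toMatrixInnerProductSpace hW
  exact (sq _).trans_le (real_inner_mul_inner_self_le X Y)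

namespace Matrix.PosSemidef

variable {n : Type*} [Fintype n] [DecidableEq n]

theorem isHermitian_sqrt {𝕜 : Type*} [RCLike 𝕜] [PartialOrder 𝕜] {A : Matrix n n 𝕜}
    (hA : A.PosSemidef) : hA.sqrt.IsHermitian :=
  isHermitian_mul_mul_conjTranspose _ <|
    isHermitian_diagonal_of_self_adjoint _ <| funext fun _ => RCLike.conj_ofReal _

theorem sqrt_mul_self {A : Matrix n n ℝ} (hA : A.PosSemidef) : hA.sqrt * hA.sqrt = A := by
  have hsqrt : hA.sqrt = Unitary.conjStarAlgAut ℝ _ hA.1.eigenvectorUnitary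
      (diagonal ((↑) ∘ (Real.sqrt ∘ hA.1.eigenvalues))) := rfl
  conv_rhs => rw [hA.1.spectral_theorem]
  rw [hsqrt, ← map_mul, diagonal_mul_diagonal]
  congr 2 with i
  simp [Real.mul_self_sqrt (hA.eigenvalues_nonneg i)]

end Matrix.PosSemidef

/-- Cauchy–Schwarz-type inequality underlying the lower bound of Lemma 1: for every real
`m × n` matrix `M` and every `m × m` real positive definite matrix `Γ`,
`(tr ((M Mᵀ) ^ (1/2)))² ≤ tr (Mᵀ Γ⁻¹ M) * tr Γ`. -/
theorem sq_trace_sqrt_le_trace_mul_trace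
    {m n : ℕ} (M : Matrix (Fin m) (Fin n) ℝ) (Γ : Matrix (Fin m) (Fin m) ℝ)
    (hΓ : Γ.PosDef) :
    ((posSemidef_self_mul_transpose M).sqrt.trace) ^ 2
      ≤ (Mᵀ * Γ⁻¹ * M).trace * Γ.trace := by
  set S := (posSemidef_self_mul_transpose M).sqrt
  have hS : Sᵀ = S := (posSemidef_self_mul_transpose M).isHermitian_sqrt.eq
  have hSS : S * S = M * Mᵀ := (posSemidef_self_mul_transpose M).sqrt_mul_self
  have hΓ_symm : Γᵀ = Γ := hΓ.isHermitian.eq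
  have hΓΓinv : Γ * Γ⁻¹ = 1 := mul_nonsing_inv Γ <| (isUnit_iff_isUnit_det Γ).mp hΓ.isUnit
  have hSΓ : (Γ * Γ⁻¹ * Sᵀ).trace = S.trace := by rw [hΓΓinv, one_mul, hS]
  have hSS_trace : (S * Γ⁻¹ * Sᵀ).trace = (Mᵀ * Γ⁻¹ * M).trace := by
    rw [hS, trace_mul_cycle, hSS, trace_mul_cycle Mᵀ]
  have hΓΓ : (Γ * Γ⁻¹ * Γᵀ).trace = Γ.trace := by rw [hΓΓinv, one_mul, hΓ_symm]
  simpa only [hSΓ, hSS_trace, hΓΓ] using trace_mul_mul_transpose_sq_le hΓ.inv.posSemidef S Γ
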